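/- arXiv:2403.14890 — 5 statements merged into one kernel-verified Lean document; each statement's English description precedes it below -/
import Mathlib

section
/- Fix an integer d ≥ 3 and define functions L_s : [0,∞) → ℝ for s ≥ 1 recursively by L_1(T) = e^{-dT} and L_{s+1}(T) = e^{-(d-1)T} · ∫_0^T e^{-x} · e^{T-x} · L_s(T-x) dx. Then for every integer s ≥ 1 and every real T ≥ 0, L_s(T) = e^{-(s(d-2)+2)T} · (e^{(d-2)T} - 1)^{s-1} / ((d-2)^{s-1} · (s-1)!). -/
open Real intervalIntegral

private lemma int_key (a T : ℝ) (ha : a ≠ 0) (n : ℕ) :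
    ∫ x in (0:ℝ)..T, Real.exp (a*x) * (Real.exp (a*T) - Real.exp (a*x))^n
      = (Real.exp (a*T) - 1)^(n+1) / (((n:ℝ)+1)*a) := by
  have hderiv : ∀ x : ℝ, HasDerivAt
      (fun x => -((Real.exp (a*T) - Real.exp (a*x))^(n+1) / (((n:ℝ)+1)*a)))
      (Real.exp (a*x) * (Real.exp (a*T) - Real.exp (a*x))^n) x := by
    intro x
    have h1 : HasDerivAt (fun x : ℝ => a*x) a x := by
      simpa using (hasDerivAt_id x).const_mul a
    have h3 := (h1.exp.const_sub (Real.exp (a*T)))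
    have h5 := ((h3.pow (n+1)).div_const (((n:ℝ)+1)*a)).neg
    refine HasDerivAt.congr_deriv h5 ?_
    simp only [Nat.add_sub_cancel]
    push_cast
    field_simp
  have hcont : Continuous (fun x => Real.exp (a*x) * (Real.exp (a*T) - Real.exp (a*x))^n) := by
    continuity
  rw [intervalIntegral.integral_eq_sub_of_hasDerivAt (fun x _ => hderiv x)
      (hcont.intervalIntegrable 0 T)]
  simp [sub_self, zero_pow (Nat.succ_ne_zero n), mul_zero]

/-- with `d ≥ 3` and `L` defined recursively by
`L 1 T = e^{-dT}` and `L (s+1) T = e^{-(d-1)T} · ∫_0^T e^{-x} e^{T-x} L s (T-x) dx`,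
one has `L s T = e^{-(s(d-2)+2)T} (e^{(d-2)T}-1)^{s-1} / ((d-2)^{s-1} (s-1)!)`. -/
theorem stmt_1 (d : ℕ) (hd : 3 ≤ d) (L : ℕ → ℝ → ℝ)
    (hL1 : ∀ T : ℝ, 0 ≤ T → L 1 T = Real.exp (-(d : ℝ) * T))
    (hLrec : ∀ s : ℕ, 1 ≤ s → ∀ T : ℝ, 0 ≤ T →
      L (s + 1) T = Real.exp (-((d : ℝ) - 1) * T) *
        ∫ x in (0:ℝ)..T, Real.exp (-x) * Real.exp (T - x) * L s (T - x)) :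
    ∀ s : ℕ, 1 ≤ s → ∀ T : ℝ, 0 ≤ T →
      L s T = Real.exp (-((s : ℝ) * ((d : ℝ) - 2) + 2) * T) *
        (Real.exp (((d : ℝ) - 2) * T) - 1) ^ (s - 1) /
        (((d : ℝ) - 2) ^ (s - 1) * (Nat.factorial (s - 1) : ℝ)) := by
  set a : ℝ := (d : ℝ) - 2 with ha_def
  have hd3 : (3:ℝ) ≤ (d:ℝ) := by exact_mod_cast hd
  have ha : 0 < a := by simp [ha_def]; linarith
  have ha' : a ≠ 0 := ne_of_gt ha
  -- main induction: statement for s = n+1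
  have main : ∀ n : ℕ, ∀ T : ℝ, 0 ≤ T →
      L (n+1) T = Real.exp (-(((n:ℝ)+1) * a + 2) * T) *
        (Real.exp (a * T) - 1) ^ n / (a ^ n * (Nat.factorial n : ℝ)) := by
    intro n
    induction n with
    | zero =>
      intro T hT
      rw [hL1 T hT]
      simp only [Nat.cast_zero, pow_zero, Nat.factorial_zero, Nat.cast_one]
      rw [show -(((0:ℝ)+1)*a+2)*T = -(d:ℝ)*T by rw [ha_def]; ring]
      ring
    | succ n ih =>
      intro T hT
      rw [hLrec (n+1) (Nat.le_add_left 1 n) T hT]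
      set C : ℝ := a ^ n * (Nat.factorial n : ℝ) with hC_def
      have hC : C ≠ 0 := by
        apply mul_ne_zero (pow_ne_zero _ ha')
        exact_mod_cast (Nat.factorial_pos n).ne'
      have hcongr : (∫ x in (0:ℝ)..T, Real.exp (-x) * Real.exp (T - x) * L (n+1) (T - x))
          = ∫ x in (0:ℝ)..T, (Real.exp (-(((n:ℝ)+1)*a+1)*T) / C)
              * (Real.exp (a*x) * (Real.exp (a*T) - Real.exp (a*x))^n) := by
        apply intervalIntegral.integral_congr
        intro x hx
        rw [Set.uIcc_of_le hT] at hx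
        obtain ⟨hx0, hxT⟩ := hx
        simp only []
        rw [ih (T - x) (by linarith)]
        have h1 : Real.exp (-(a*x)) * (Real.exp (a*T) - Real.exp (a*x))
            = Real.exp (a*(T-x)) - 1 := by
          rw [mul_sub, ← Real.exp_add, ← Real.exp_add,
            show -(a*x) + a*T = a*(T-x) by ring, show -(a*x) + a*x = 0 by ring,
            Real.exp_zero]
        rw [← h1, mul_pow, ← Real.exp_nat_mul]
        have hA : Real.exp (-x) * Real.exp (T-x) * Real.exp (-(((n:ℝ)+1)*a+2)*(T-x))
            * Real.exp ((n:ℝ)*(-(a*x)))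
            = Real.exp (-(((n:ℝ)+1)*a+1)*T) * Real.exp (a*x) := by
          rw [← Real.exp_add, ← Real.exp_add, ← Real.exp_add, ← Real.exp_add]
          congr 1
          ring
        linear_combination (((Real.exp (a*T) - Real.exp (a*x))^n) / C) * hA
      rw [hcongr, intervalIntegral.integral_const_mul, int_key a T ha' n]
      rw [show Nat.factorial (n+1) = (n+1) * Nat.factorial n from rfl]
      push_cast
      have hE : Real.exp (-((d:ℝ)-1)*T) * Real.exp (-(((n:ℝ)+1)*a+1)*T)
          = Real.exp (-(((n:ℝ)+1+1)*a+2)*T) := by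
        rw [← Real.exp_add]; congr 1; rw [ha_def]; ring
      rw [show Real.exp (-((d:ℝ)-1)*T) * (Real.exp (-(((n:ℝ)+1)*a+1)*T) / C *
            ((Real.exp (a*T) - 1)^(n+1) / (((n:ℝ)+1)*a)))
          = (Real.exp (-((d:ℝ)-1)*T) * Real.exp (-(((n:ℝ)+1)*a+1)*T)) *
            ((Real.exp (a*T) - 1)^(n+1) / (((n:ℝ)+1)*a) / C) by ring, hE, hC_def]
      rw [div_div,
        show ((n:ℝ)+1)*a*(a^n*(Nat.factorial n : ℝ))
          = a^(n+1)*(((n:ℝ)+1)*(Nat.factorial n : ℝ)) by ring,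
        mul_div_assoc]
  intro s hs T hT
  obtain ⟨n, rfl⟩ : ∃ n, s = n + 1 := ⟨s - 1, (Nat.succ_pred_eq_of_pos hs).symm⟩
  rw [main n T hT]
  simp only [Nat.add_sub_cancel]
  push_cast
  ring_nf
end

section
/- For all integers K ≥ 1 and d ≥ 2, the function T ↦ g(T;K,d) is monotone nondecreasing on the interval [0, K−1]. -/
/-!
After the substitution `s = T - t`, `g(T) = ∫_0^T φ(T - s) e^{-s(d-1)} ds` with the Gamma
density `φ(u) = u^{K-1} e^{-u} / (K-1)!`, which increases on `[0, K-1]`. For `a ≤ b` in that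
interval, split `∫_0^b` at `a`: on `[0, a]` the integrand for `b` dominates the one for `a`, since
`φ(b - s) ≥ φ(a - s)`, and the remaining piece over `[a, b]` is nonnegative.
-/

open Real intervalIntegral

/-- `g T K d = ∫_0^T (t^{K-1} e^{-t}/(K-1)!) · e^{-(T-t)(d-1)} dt` (Eq. (3) of the paper). -/
noncomputable def g (T : ℝ) (K d : ℕ) : ℝ :=
  ∫ t in (0:ℝ)..T, (t ^ (K - 1) * Real.exp (-t) / (Nat.factorial (K - 1) : ℝ)) *
    Real.exp (-(T - t) * ((d : ℝ) - 1))

open Set MeasureTheory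

theorem monotoneOn_pow_mul_exp_neg (n : ℕ) :
    MonotoneOn (fun t : ℝ => t ^ n * exp (-t)) (Icc 0 n) := by
  refine monotoneOn_of_deriv_nonneg (convex_Icc _ _) (by fun_prop) (by fun_prop) ?_
  intro t ht
  rw [interior_Icc] at ht
  obtain ⟨ht0, htn⟩ := ht
  have hn : n ≠ 0 := by rintro rfl; norm_num at htn; linarith
  have hderiv : HasDerivAt (fun t : ℝ => t ^ n * exp (-t))
      (t ^ (n - 1) * (n - t) * exp (-t)) t := by
    refine ((hasDerivAt_pow n t).mul (hasDerivAt_neg t).exp).congr_deriv ?_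
    rw [← mul_pow_sub_one hn t]
    ring
  rw [hderiv.deriv]
  exact mul_nonneg (mul_nonneg (by positivity) (by linarith)) (exp_pos _).le

theorem monotoneOn_integral_comp_sub_mul {φ ψ : ℝ → ℝ} {c : ℝ} (hφ : Continuous φ)
    (hψ : Continuous ψ) (hφ_mono : MonotoneOn φ (Icc 0 c)) (hφ_zero : 0 ≤ φ 0)
    (hψ_nonneg : ∀ s ∈ Icc 0 c, 0 ≤ ψ s) :
    MonotoneOn (fun T => ∫ s in (0:ℝ)..T, φ (T - s) * ψ s) (Icc 0 c) := by
  intro a ha b hb hab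
  dsimp only
  have hint : ∀ T x y, IntervalIntegrable (fun s => φ (T - s) * ψ s) volume x y := fun T x y =>
    (by fun_prop : Continuous fun s => φ (T - s) * ψ s).intervalIntegrable x y
  have hφ_nonneg : ∀ u ∈ Icc 0 c, 0 ≤ φ u := fun u hu =>
    hφ_zero.trans (hφ_mono ⟨le_rfl, hu.1.trans hu.2⟩ hu hu.1)
  rw [← integral_add_adjacent_intervals (hint b 0 a) (hint b a b)]
  have hhead : ∫ s in 0..a, φ (a - s) * ψ s ≤ ∫ s in 0..a, φ (b - s) * ψ s :=
    integral_mono_on ha.1 (hint a 0 a) (hint b 0 a) fun s hs =>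
      mul_le_mul_of_nonneg_right
        (hφ_mono ⟨by linarith [hs.2], by linarith [hs.1, hb.2]⟩
          ⟨by linarith [hs.2], by linarith [hs.1, hb.2]⟩ (by linarith))
        (hψ_nonneg s ⟨hs.1, by linarith [hs.2, hb.2]⟩)
  have htail : 0 ≤ ∫ s in a..b, φ (b - s) * ψ s :=
    integral_nonneg hab fun s hs =>
      mul_nonneg (hφ_nonneg _ ⟨by linarith [hs.2], by linarith [hs.1, ha.1, hb.2]⟩)
        (hψ_nonneg s ⟨by linarith [hs.1, ha.1], by linarith [hs.2, hb.2]⟩)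
  linarith

theorem g_eq_integral_comp_sub (T : ℝ) (K d : ℕ) :
    g T K d = ∫ s in (0:ℝ)..T,
      (T - s) ^ (K - 1) * exp (-(T - s)) / (K - 1).factorial * exp (-s * ((d : ℝ) - 1)) := by
  have h := integral_comp_sub_left (a := 0) (b := T) (fun t =>
    t ^ (K - 1) * exp (-t) / (K - 1).factorial * exp (-(T - t) * ((d : ℝ) - 1))) T
  simp only [sub_self, sub_zero, sub_sub_cancel] at h
  rw [g, ← h]

theorem stmt_3_general (K d : ℕ) :
    MonotoneOn (fun T => g T K d) (Set.Icc (0:ℝ) ((K : ℝ) - 1)) := by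
  -- `K - 1` truncates in `ℕ`; at `K = 0` the real interval `[0, -1]` is empty.
  have hcast : (K : ℝ) - 1 ≤ (K - 1 : ℕ) := by
    rw [sub_le_iff_le_add]; exact_mod_cast (by omega : K ≤ K - 1 + 1)
  simp_rw [g_eq_integral_comp_sub]
  refine (monotoneOn_integral_comp_sub_mul
    (φ := fun u => u ^ (K - 1) * exp (-u) / (K - 1).factorial) (by fun_prop) (by fun_prop) ?_ ?_
    fun s _ => (exp_pos _).le).mono (Icc_subset_Icc_right hcast)
  · exact fun x hx y hy hxy =>
      div_le_div_of_nonneg_right (monotoneOn_pow_mul_exp_neg _ hx hy hxy) (Nat.cast_nonneg _)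
  · positivity

/-- for integers `K ≥ 1` and `d ≥ 2`, the function `T ↦ g(T;K,d)` is
monotone nondecreasing on `[0, K−1]`. -/
theorem stmt_3 (K d : ℕ) (hK : 1 ≤ K) (hd : 2 ≤ d) :
    MonotoneOn (fun T => g T K d) (Set.Icc (0:ℝ) ((K : ℝ) - 1)) :=
  stmt_3_general K d
end

section
/- For all integers K ≥ 1 and d ≥ 2, there exists a real number T_max ≥ K−1 with T_max > 0 such that the function T ↦ g(T;K,d) is strictly increasing on [0, T_max] and strictly decreasing on [T_max, ∞). -/
open Real intervalIntegral

noncomputable def auxF (k : ℕ) (c : ℝ) (t : ℝ) : ℝ :=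
  t ^ k * Real.exp ((c - 1) * t) / (Nat.factorial k : ℝ)

noncomputable def auxH (k : ℕ) (c : ℝ) (T : ℝ) : ℝ :=
  ∫ t in (0:ℝ)..T, auxF k c t

noncomputable def auxPhi (k : ℕ) (c : ℝ) (T : ℝ) : ℝ :=
  auxF k c T - c * auxH k c T

lemma contF (k : ℕ) (c : ℝ) : Continuous (auxF k c) := by
  unfold auxF; fun_prop

lemma gEq (K d : ℕ) (T : ℝ) :
    g T K d = Real.exp (-((d:ℝ)-1) * T) * auxH (K-1) ((d:ℝ)-1) T := by
  unfold g auxH auxF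
  rw [← intervalIntegral.integral_const_mul]
  apply intervalIntegral.integral_congr
  intro t _
  have h1 : Real.exp (-(T - t) * ((d:ℝ)-1)) =
      Real.exp (-((d:ℝ)-1) * T) * Real.exp (((d:ℝ)-1) * t) := by
    rw [← Real.exp_add]; congr 1; ring
  have h2 : Real.exp ((((d:ℝ)-1) - 1) * t) =
      Real.exp (((d:ℝ)-1) * t) * Real.exp (-t) := by
    rw [← Real.exp_add]; congr 1; ring
  simp only []
  rw [h1, h2]; ring

lemma hasDerivAt_H (k : ℕ) (c : ℝ) (T : ℝ) :
    HasDerivAt (auxH k c) (auxF k c T) T := by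
  exact intervalIntegral.integral_hasDerivAt_right
    ((contF k c).intervalIntegrable 0 T)
    ((contF k c).stronglyMeasurableAtFilter _ _)
    (contF k c).continuousAt

lemma hasDerivAt_F (k : ℕ) (c : ℝ) (t : ℝ) :
    HasDerivAt (auxF k c)
      (((k:ℝ) * t ^ (k-1) * Real.exp ((c-1)*t) + t ^ k * (Real.exp ((c-1)*t) * (c-1)))
        / (Nat.factorial k : ℝ)) t := by
  have hp : HasDerivAt (fun t : ℝ => t ^ k) ((k:ℝ) * t ^ (k-1)) t := hasDerivAt_pow k t
  have he : HasDerivAt (fun t : ℝ => Real.exp ((c-1)*t)) (Real.exp ((c-1)*t) * (c-1)) t := by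
    simpa using (HasDerivAt.exp ((hasDerivAt_id t).const_mul (c-1)))
  exact (hp.mul he).div_const _

lemma hasDerivAt_phi (k : ℕ) (c : ℝ) (t : ℝ) :
    HasDerivAt (auxPhi k c)
      (Real.exp ((c-1)*t) * ((k:ℝ) * t ^ (k-1) - t ^ k) / (Nat.factorial k : ℝ)) t := by
  have h := (hasDerivAt_F k c t).sub ((hasDerivAt_H k c t).const_mul c)
  refine h.congr_deriv ?_
  unfold auxF
  field_simp
  ring

lemma hasDerivAt_g (K d : ℕ) (T : ℝ) :
    HasDerivAt (fun T => g T K d)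
      (Real.exp (-((d:ℝ)-1) * T) * auxPhi (K-1) ((d:ℝ)-1) T) T := by
  have hfun : (fun T => g T K d) = fun T =>
      Real.exp (-((d:ℝ)-1) * T) * auxH (K-1) ((d:ℝ)-1) T := funext (gEq K d)
  rw [hfun]
  have he : HasDerivAt (fun T : ℝ => Real.exp (-((d:ℝ)-1) * T))
      (Real.exp (-((d:ℝ)-1) * T) * (-((d:ℝ)-1))) T := by
    simpa using (HasDerivAt.exp ((hasDerivAt_id T).const_mul (-((d:ℝ)-1))))
  have h := he.mul (hasDerivAt_H (K-1) ((d:ℝ)-1) T)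
  refine h.congr_deriv ?_
  unfold auxPhi
  ring

lemma strictMonoOn_phi (k : ℕ) (hk : 1 ≤ k) (c : ℝ) :
    StrictMonoOn (auxPhi k c) (Set.Icc 0 (k:ℝ)) := by
  apply strictMonoOn_of_deriv_pos (convex_Icc _ _)
  · exact fun x _ => (hasDerivAt_phi k c x).continuousAt.continuousWithinAt
  · intro x hx
    rw [interior_Icc] at hx
    rw [(hasDerivAt_phi k c x).deriv]
    have h1 : (0:ℝ) < x := hx.1
    have h2 : x < (k:ℝ) := hx.2
    have hxk : x ^ k = x ^ (k-1) * x := by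
      conv_lhs => rw [show k = (k-1)+1 from (Nat.succ_pred_eq_of_pos hk).symm]
      rw [pow_succ]
    have hpos : (0:ℝ) < (k:ℝ) * x ^ (k-1) - x ^ k := by
      rw [hxk]; nlinarith [pow_pos h1 (k-1)]
    have hf : (0:ℝ) < (Nat.factorial k : ℝ) := by positivity
    positivity

lemma strictAntiOn_phi (k : ℕ) (c : ℝ) :
    StrictAntiOn (auxPhi k c) (Set.Ici (k:ℝ)) := by
  apply strictAntiOn_of_deriv_neg (convex_Ici _)
  · exact fun x _ => (hasDerivAt_phi k c x).continuousAt.continuousWithinAt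
  · intro x hx
    rw [interior_Ici] at hx
    rw [(hasDerivAt_phi k c x).deriv]
    have hx0 : (0:ℝ) < x := lt_of_le_of_lt (Nat.cast_nonneg k) hx
    have hneg : (k:ℝ) * x ^ (k-1) - x ^ k < 0 := by
      rcases Nat.eq_zero_or_pos k with h0 | hpos
      · subst h0; norm_num
      · have hxk : x ^ k = x ^ (k-1) * x := by
          conv_lhs => rw [show k = (k-1)+1 from (Nat.succ_pred_eq_of_pos hpos).symm]
          rw [pow_succ]
        have hkx : (k:ℝ) < x := hx
        rw [hxk]; nlinarith [pow_pos hx0 (k-1)]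
    have hf : (0:ℝ) < (Nat.factorial k : ℝ) := by positivity
    apply div_neg_of_neg_of_pos _ hf
    exact mul_neg_of_pos_of_neg (Real.exp_pos _) hneg

lemma phi_at_zero (k : ℕ) (hk : 1 ≤ k) (c : ℝ) : auxPhi k c 0 = 0 := by
  unfold auxPhi auxF auxH
  simp [zero_pow (by omega : k ≠ 0)]

lemma phi_pos_k (k : ℕ) (c : ℝ) : 0 < auxPhi k c (k:ℝ) := by
  rcases Nat.eq_zero_or_pos k with h0 | hpos
  · subst h0
    unfold auxPhi auxF auxH
    norm_num
  · have hmem0 : (0:ℝ) ∈ Set.Icc (0:ℝ) (k:ℝ) := ⟨le_refl _, Nat.cast_nonneg k⟩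
    have hmemk : (k:ℝ) ∈ Set.Icc (0:ℝ) (k:ℝ) := ⟨Nat.cast_nonneg k, le_refl _⟩
    have hk0 : (0:ℝ) < (k:ℝ) := by exact_mod_cast hpos
    have := strictMonoOn_phi k hpos c hmem0 hmemk hk0
    rwa [phi_at_zero k hpos c] at this

lemma g_pos (K d : ℕ) (T : ℝ) (hT : 0 < T) : 0 < g T K d := by
  unfold g
  apply intervalIntegral.intervalIntegral_pos_of_pos_on
  · apply Continuous.intervalIntegrable; fun_prop
  · intro x hx
    have hx0 : 0 < x := hx.1
    have hf : (0:ℝ) < (Nat.factorial (K-1) : ℝ) := by positivity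
    exact mul_pos (div_pos (mul_pos (pow_pos hx0 _) (Real.exp_pos _)) hf) (Real.exp_pos _)
  · exact hT

lemma g_nonneg (K d : ℕ) (T : ℝ) (hT : 0 ≤ T) : 0 ≤ g T K d := by
  unfold g
  apply intervalIntegral.integral_nonneg hT
  intro x hx
  have hf : (0:ℝ) < (Nat.factorial (K-1) : ℝ) := by positivity
  exact mul_nonneg (div_nonneg (mul_nonneg (pow_nonneg hx.1 _) (Real.exp_pos _).le) hf.le)
    (Real.exp_pos _).le

lemma g_le (K d : ℕ) (hK : 1 ≤ K) (hd : 2 ≤ d) (T : ℝ) (hT : 0 ≤ T) :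
    g T K d ≤ T ^ K * Real.exp (-T) / (Nat.factorial (K-1) : ℝ) := by
  have hd1 : (1:ℝ) ≤ (d:ℝ) - 1 := by
    have : (2:ℝ) ≤ (d:ℝ) := by exact_mod_cast hd
    linarith
  have hle : ∀ x ∈ Set.Icc (0:ℝ) T,
      (x ^ (K - 1) * Real.exp (-x) / (Nat.factorial (K - 1) : ℝ)) *
        Real.exp (-(T - x) * ((d : ℝ) - 1)) ≤
      T ^ (K-1) * Real.exp (-T) / (Nat.factorial (K-1) : ℝ) := by
    intro x hx
    have h1 : x ^ (K-1) ≤ T ^ (K-1) := pow_le_pow_left₀ hx.1 hx.2 _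
    have h2 : Real.exp (-x) * Real.exp (-(T-x)*((d:ℝ)-1)) ≤ Real.exp (-T) := by
      rw [← Real.exp_add]
      apply Real.exp_le_exp.mpr
      nlinarith [hx.2, hx.1]
    calc (x ^ (K - 1) * Real.exp (-x) / (Nat.factorial (K - 1) : ℝ)) *
          Real.exp (-(T - x) * ((d : ℝ) - 1))
        = (x ^ (K-1) * (Real.exp (-x) * Real.exp (-(T-x)*((d:ℝ)-1)))) /
            (Nat.factorial (K-1) : ℝ) := by ring
      _ ≤ (T ^ (K-1) * Real.exp (-T)) / (Nat.factorial (K-1) : ℝ) := by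
          gcongr
  have hint : IntervalIntegrable (fun x => (x ^ (K - 1) * Real.exp (-x) /
      (Nat.factorial (K - 1) : ℝ)) * Real.exp (-(T - x) * ((d : ℝ) - 1)))
      MeasureTheory.volume 0 T := by
    apply Continuous.intervalIntegrable; fun_prop
  have h := intervalIntegral.integral_mono_on hT hint intervalIntegrable_const hle
  rw [intervalIntegral.integral_const] at h
  unfold g
  calc (∫ t in (0:ℝ)..T, (t ^ (K - 1) * Real.exp (-t) / (Nat.factorial (K - 1) : ℝ)) *
        Real.exp (-(T - t) * ((d : ℝ) - 1)))
      ≤ (T - 0) • (T ^ (K-1) * Real.exp (-T) / (Nat.factorial (K-1) : ℝ)) := h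
    _ = T ^ K * Real.exp (-T) / (Nat.factorial (K-1) : ℝ) := by
        rw [smul_eq_mul]
        have : T ^ K = T * T ^ (K-1) := by
          conv_lhs => rw [show K = (K-1)+1 from (Nat.succ_pred_eq_of_pos hK).symm]
          rw [pow_succ]; ring
        rw [this]; ring

lemma g_tendsto (K d : ℕ) (hK : 1 ≤ K) (hd : 2 ≤ d) :
    Filter.Tendsto (fun T => g T K d) Filter.atTop (nhds 0) := by
  apply squeeze_zero' (g := fun T => T ^ K * Real.exp (-T) / (Nat.factorial (K-1) : ℝ))
  · filter_upwards [Filter.eventually_ge_atTop (0:ℝ)] with T hT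
    exact g_nonneg K d T hT
  · filter_upwards [Filter.eventually_ge_atTop (0:ℝ)] with T hT
    exact g_le K d hK hd T hT
  · simpa using (tendsto_pow_mul_exp_neg_atTop_nhds_zero K).div_const
      (Nat.factorial (K-1) : ℝ)

lemma exists_phi_neg (K d : ℕ) (hK : 1 ≤ K) (hd : 2 ≤ d) :
    ∃ T1 : ℝ, ((K-1 : ℕ):ℝ) < T1 ∧ auxPhi (K-1) ((d:ℝ)-1) T1 < 0 := by
  by_contra h
  push_neg at h
  have hmono : MonotoneOn (fun T => g T K d) (Set.Ici ((K-1:ℕ):ℝ)) := by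
    apply monotoneOn_of_deriv_nonneg (convex_Ici _)
    · exact fun x _ => (hasDerivAt_g K d x).differentiableAt.continuousAt.continuousWithinAt
    · exact fun x _ => (hasDerivAt_g K d x).differentiableAt.differentiableWithinAt
    · intro x hx
      rw [interior_Ici] at hx
      rw [(hasDerivAt_g K d x).deriv]
      exact mul_nonneg (Real.exp_pos _).le (h x hx)
  have hKpos : (0:ℝ) < (K:ℝ) := by exact_mod_cast hK
  have hklt : ((K-1:ℕ):ℝ) < (K:ℝ) := by
    have : K - 1 < K := by omega
    exact_mod_cast this
  have hga : 0 < g (K:ℝ) K d := g_pos K d _ hKpos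
  have hev : ∀ᶠ T in Filter.atTop, g (K:ℝ) K d ≤ g T K d := by
    filter_upwards [Filter.eventually_ge_atTop ((K:ℝ))] with T hT
    exact hmono hklt.le (hklt.le.trans hT) hT
  have := ge_of_tendsto (g_tendsto K d hK hd) hev
  linarith

/-- for integers `K ≥ 1`, `d ≥ 2`, there exists `T_max ≥ K−1`, `T_max > 0`,
such that `T ↦ g(T;K,d)` is strictly increasing on `[0, T_max]` and strictly decreasing
on `[T_max, ∞)`. -/
theorem stmt_5 (K d : ℕ) (hK : 1 ≤ K) (hd : 2 ≤ d) :
    ∃ Tmax : ℝ, (K : ℝ) - 1 ≤ Tmax ∧ 0 < Tmax ∧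
      StrictMonoOn (fun T => g T K d) (Set.Icc (0:ℝ) Tmax) ∧
      StrictAntiOn (fun T => g T K d) (Set.Ici Tmax) := by
  set k : ℕ := K - 1 with hkdef
  set c : ℝ := (d:ℝ) - 1 with hcdef
  have hck : ((K:ℝ) - 1) = (k:ℝ) := by
    rw [hkdef]
    have : ((K - 1 : ℕ) : ℝ) = (K:ℝ) - 1 := by
      have : (1:ℕ) ≤ K := hK
      push_cast [Nat.cast_sub this]
      ring
    rw [this]
  obtain ⟨T1, hT1gt, hT1neg⟩ := exists_phi_neg K d hK hd
  have hphik : 0 < auxPhi k c (k:ℝ) := phi_pos_k k c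
  have hcontphi : ContinuousOn (auxPhi k c) (Set.Icc (k:ℝ) T1) :=
    fun x _ => (hasDerivAt_phi k c x).continuousAt.continuousWithinAt
  have h0mem : (0:ℝ) ∈ Set.Ioo (auxPhi k c T1) (auxPhi k c (k:ℝ)) := ⟨hT1neg, hphik⟩
  obtain ⟨Tmax, hTmem, hTeq⟩ :=
    intermediate_value_Ioo' (le_of_lt hT1gt) hcontphi h0mem
  have hdiffg : Differentiable ℝ (fun T => g T K d) :=
    fun x => (hasDerivAt_g K d x).differentiableAt
  have hkTmax : (k:ℝ) < Tmax := hTmem.1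
  refine ⟨Tmax, ?_, ?_, ?_, ?_⟩
  · rw [hck]; exact hkTmax.le
  · exact lt_of_le_of_lt (Nat.cast_nonneg k) hkTmax
  · apply strictMonoOn_of_deriv_pos (convex_Icc _ _) hdiffg.continuous.continuousOn
    intro x hx
    rw [interior_Icc] at hx
    rw [(hasDerivAt_g K d x).deriv]
    have hphi : 0 < auxPhi k c x := by
      rcases le_or_gt x (k:ℝ) with hxk | hxk
      · have hk1 : 1 ≤ k := by
          by_contra hk0
          have : k = 0 := by omega
          rw [this] at hxk
          simp at hxk
          exact absurd hxk (not_le.mpr hx.1)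
        have hmem0 : (0:ℝ) ∈ Set.Icc (0:ℝ) (k:ℝ) := ⟨le_refl _, Nat.cast_nonneg k⟩
        have hmemx : x ∈ Set.Icc (0:ℝ) (k:ℝ) := ⟨hx.1.le, hxk⟩
        have := strictMonoOn_phi k hk1 c hmem0 hmemx hx.1
        rwa [phi_at_zero k hk1 c] at this
      · have := strictAntiOn_phi k c hxk.le (hxk.le.trans hx.2.le) hx.2
        rwa [hTeq] at this
    exact mul_pos (Real.exp_pos _) hphi
  · apply strictAntiOn_of_deriv_neg (convex_Ici _) hdiffg.continuous.continuousOn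
    intro x hx
    rw [interior_Ici] at hx
    rw [(hasDerivAt_g K d x).deriv]
    have hphi : auxPhi k c x < 0 := by
      have := strictAntiOn_phi k c hkTmax.le ((hkTmax.trans hx).le) hx
      rwa [hTeq] at this
    exact mul_neg_of_pos_of_neg (Real.exp_pos _) hphi
end

section
/- For all integers d ≥ 3 and N ≥ 2 and every real T ≥ 0, e^{-(d-1)T} · ∫_0^T e^{-x} · e^{-(d-N+1)(T-x)} · ( (e^{-(T-x)} − e^{-(d-1)(T-x)})/(d−2) )^{N-2} dx = e^{-(N(d-2)+2)T} · (e^{(d-2)T} − 1)^{N-1} / ( (N−1) · (d−2)^{N-1} ). -/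
open Real intervalIntegral

/-- for integers `d ≥ 3`, `N ≥ 2` and real `T ≥ 0`,
`e^{-(d-1)T} ∫_0^T e^{-x} e^{-(d-N+1)(T-x)} ((e^{-(T-x)} − e^{-(d-1)(T-x)})/(d−2))^{N-2} dx
  = e^{-(N(d-2)+2)T} (e^{(d-2)T} − 1)^{N-1} / ((N−1)(d−2)^{N-1})`. -/
theorem stmt_12 (d N : ℕ) (hd : 3 ≤ d) (hN : 2 ≤ N) (T : ℝ) (hT : 0 ≤ T) :
    Real.exp (-((d : ℝ) - 1) * T) *
      ∫ x in (0:ℝ)..T, Real.exp (-x) * Real.exp (-((d : ℝ) - (N : ℝ) + 1) * (T - x)) *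
        ((Real.exp (-(T - x)) - Real.exp (-((d : ℝ) - 1) * (T - x))) / ((d : ℝ) - 2)) ^ (N - 2)
    = Real.exp (-((N : ℝ) * ((d : ℝ) - 2) + 2) * T) *
      (Real.exp (((d : ℝ) - 2) * T) - 1) ^ (N - 1) /
      (((N : ℝ) - 1) * ((d : ℝ) - 2) ^ (N - 1)) := by
  obtain ⟨n, rfl⟩ : ∃ n, N = n + 2 := ⟨N - 2, by omega⟩
  obtain ⟨m, rfl⟩ : ∃ m, d = m + 3 := ⟨d - 3, by omega⟩
  set c : ℝ := (↑(m + 3) : ℝ) - 2 with hc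
  have hm0 : (0:ℝ) ≤ (m:ℝ) := Nat.cast_nonneg m
  have hcpos : 0 < c := by simp only [hc]; push_cast; linarith
  have hcne : c ≠ 0 := ne_of_gt hcpos
  have hNsub : n + 2 - 2 = n := by omega
  have hNsub1 : n + 2 - 1 = n + 1 := by omega
  rw [hNsub, hNsub1]
  set K : ℝ := -Real.exp (-T) / ((n + 1 : ℝ) * c ^ (n + 1)) with hK
  have hn1 : ((n:ℝ) + 1) ≠ 0 := by positivity
  have hderiv : ∀ x ∈ Set.uIcc (0:ℝ) T,
      HasDerivAt (fun x : ℝ => K * (1 - Real.exp (-c * (T - x))) ^ (n + 1))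
        (Real.exp (-x) * Real.exp (-((↑(m+3) : ℝ) - (↑(n+2) : ℝ) + 1) * (T - x)) *
          ((Real.exp (-(T - x)) - Real.exp (-((↑(m+3) : ℝ) - 1) * (T - x))) / c) ^ n) x := by
    intro x _
    have h1 : HasDerivAt (fun x : ℝ => -c * (T - x)) c x := by
      simpa using (HasDerivAt.const_sub T (hasDerivAt_id x)).const_mul (-c)
    have h2 := h1.exp
    have h3 : HasDerivAt (fun x : ℝ => 1 - Real.exp (-c * (T - x)))
        (-(Real.exp (-c * (T - x)) * c)) x := HasDerivAt.const_sub 1 h2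
    have h4 : HasDerivAt (fun x : ℝ => K * (1 - Real.exp (-c * (T - x))) ^ (n + 1))
        (K * (↑(n + 1) * (1 - Real.exp (-c * (T - x))) ^ (n + 1 - 1) * -(Real.exp (-c * (T - x)) * c))) x :=
      (h3.fun_pow (n + 1)).const_mul K
    convert h4 using 1
    simp only [Nat.add_sub_cancel]
    have hexp : Real.exp (-(T - x)) - Real.exp (-((↑(m+3) : ℝ) - 1) * (T - x))
        = Real.exp (-(T - x)) * (1 - Real.exp (-c * (T - x))) := by
      have harg : -((↑(m+3) : ℝ) - 1) * (T - x) = -(T - x) + -c * (T - x) := by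
        simp only [hc]; push_cast; ring
      rw [harg, Real.exp_add]; ring
    rw [hexp, mul_div_assoc, mul_pow, div_pow, ← Real.exp_nat_mul]
    have h5 : Real.exp (-x) * Real.exp (-((↑(m+3) : ℝ) - (↑(n+2) : ℝ) + 1) * (T - x)) *
        Real.exp ((n:ℝ) * -(T - x)) = Real.exp (-T) * Real.exp (-c * (T - x)) := by
      rw [← Real.exp_add, ← Real.exp_add, ← Real.exp_add]
      congr 1
      simp only [hc]; push_cast; ring
    calc Real.exp (-x) * Real.exp (-((↑(m+3) : ℝ) - (↑(n+2) : ℝ) + 1) * (T - x)) *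
          (Real.exp ((n:ℝ) * -(T - x)) * ((1 - Real.exp (-c * (T - x))) ^ n / c ^ n))
        = (Real.exp (-x) * Real.exp (-((↑(m+3) : ℝ) - (↑(n+2) : ℝ) + 1) * (T - x)) *
            Real.exp ((n:ℝ) * -(T - x))) * ((1 - Real.exp (-c * (T - x))) ^ n / c ^ n) := by
          ring
      _ = Real.exp (-T) * Real.exp (-c * (T - x)) *
            ((1 - Real.exp (-c * (T - x))) ^ n / c ^ n) := by rw [h5]
      _ = K * (↑(n + 1) * (1 - Real.exp (-c * (T - x))) ^ n * -(Real.exp (-c * (T - x)) * c)) := by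
          rw [hK, pow_succ]
          field_simp
          push_cast
          ring
  have hcont : IntervalIntegrable (fun x : ℝ =>
      Real.exp (-x) * Real.exp (-((↑(m+3) : ℝ) - (↑(n+2) : ℝ) + 1) * (T - x)) *
        ((Real.exp (-(T - x)) - Real.exp (-((↑(m+3) : ℝ) - 1) * (T - x))) / c) ^ n)
      MeasureTheory.volume 0 T := by
    apply Continuous.intervalIntegrable
    fun_prop
  rw [intervalIntegral.integral_eq_sub_of_hasDerivAt hderiv hcont]
  simp only [sub_self, mul_zero, neg_zero, Real.exp_zero, sub_zero]
  rw [zero_pow (by omega : n + 1 ≠ 0)]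
  have hsplit : (1:ℝ) - Real.exp (-c * T) = Real.exp (-c * T) * (Real.exp (c * T) - 1) := by
    rw [mul_sub, ← Real.exp_add, mul_one]
    simp
  rw [hsplit, mul_pow, ← Real.exp_nat_mul]
  have hden : ((↑(n+2):ℝ) - 1) = (n:ℝ) + 1 := by push_cast; ring
  rw [hden]
  have key : Real.exp (-((↑(m+3):ℝ) - 1) * T) * Real.exp (-T) *
      Real.exp ((↑(n+1):ℝ) * (-c * T)) = Real.exp (-((↑(n+2):ℝ) * c + 2) * T) := by
    rw [← Real.exp_add, ← Real.exp_add]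
    congr 1
    simp only [hc]; push_cast; ring
  rw [show K * 0 - K * (Real.exp ((↑(n+1):ℝ) * (-c * T)) * (Real.exp (c * T) - 1) ^ (n + 1))
      = Real.exp (-T) * Real.exp ((↑(n+1):ℝ) * (-c * T)) * (Real.exp (c * T) - 1) ^ (n + 1) /
        (((n:ℝ) + 1) * c ^ (n + 1)) from by rw [hK]; ring]
  rw [← key]
  ring
end

section
/- For all integers d ≥ 3 and N ≥ 2 and every real T > 0, the ratio [ e^{-(d-N+1)T} · ( ∫_0^T e^{-t} e^{-(d-1)(T-t)} dt )^{N-1} ] / [ e^{-(d-1)T} · ∫_0^T e^{-x} e^{-(d-N+1)(T-x)} ( (e^{-(T-x)} − e^{-(d-1)(T-x)})/(d−2) )^{N-2} dx ] equals N − 1, independently of T. -/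
open Real intervalIntegral

lemma lemA (c T : ℝ) (hc : c ≠ 1) :
    ∫ t in (0:ℝ)..T, Real.exp (-t) * Real.exp (-c*(T-t))
      = (Real.exp (-T) - Real.exp (-c*T)) / (c-1) := by
  have h1 : ∀ t : ℝ, Real.exp (-t) * Real.exp (-c*(T-t)) = Real.exp ((c-1)*t - c*T) := by
    intro t; rw [← Real.exp_add]; ring_nf
  have h2 : ∀ t ∈ Set.uIcc (0:ℝ) T, HasDerivAt (fun t => Real.exp ((c-1)*t - c*T) / (c-1))
      (Real.exp (-t) * Real.exp (-c*(T-t))) t := by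
    intro t _
    have h : HasDerivAt (fun t => Real.exp ((c-1)*t - c*T)) (Real.exp ((c-1)*t - c*T) * (c-1)) t := by
      have h := (((hasDerivAt_id t).const_mul (c-1)).sub_const (c*T)).exp
      simpa [mul_comm] using h
    have h' := h.div_const (c-1)
    rw [mul_div_assoc, div_self (sub_ne_zero.mpr hc), mul_one] at h'
    rw [h1 t]; exact h'
  rw [intervalIntegral.integral_eq_sub_of_hasDerivAt h2
    (Continuous.intervalIntegrable (by fun_prop) _ _)]
  have e1 : (c-1)*T - c*T = -T := by ring
  have e2 : (c-1)*0 - c*T = -c*T := by ring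
  rw [e1, e2, div_sub_div_same]

lemma lemB (a T : ℝ) (ha : a ≠ 0) (m : ℕ) :
    ∫ x in (0:ℝ)..T, Real.exp (-(a*(T-x))) * (1 - Real.exp (-(a*(T-x))))^m
      = (1 - Real.exp (-(a*T)))^(m+1) / (((m:ℝ)+1)*a) := by
  have hm : ((m:ℝ)+1) ≠ 0 := by positivity
  have h1 : ∀ x : ℝ, Real.exp (-(a*(T-x))) = Real.exp (a*x - a*T) := by
    intro x; congr 1; ring
  have h2 : ∀ x ∈ Set.uIcc (0:ℝ) T,
      HasDerivAt (fun x => -(1 - Real.exp (a*x - a*T))^(m+1) / (((m:ℝ)+1)*a))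
      (Real.exp (-(a*(T-x))) * (1 - Real.exp (-(a*(T-x))))^m) x := by
    intro x _
    have hu : HasDerivAt (fun x => 1 - Real.exp (a*x - a*T)) (-(Real.exp (a*x - a*T) * a)) x := by
      have h := ((((hasDerivAt_id x).const_mul a).sub_const (a*T)).exp).const_sub 1
      simpa [mul_comm] using h
    have h := ((hu.pow (m+1)).neg).div_const (((m:ℝ)+1)*a)
    rw [h1 x]
    refine h.congr_deriv ?_
    push_cast
    field_simp
  rw [intervalIntegral.integral_eq_sub_of_hasDerivAt h2
    (Continuous.intervalIntegrable (by fun_prop) _ _)]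
  have e1 : a*T - a*T = 0 := by ring
  have e2 : a*0 - a*T = -(a*T) := by ring
  rw [e1, e2]
  simp only [Real.exp_zero, sub_self]
  rw [zero_pow (Nat.succ_ne_zero m)]
  ring

/-- for integers `d ≥ 3`, `N ≥ 2` and real `T > 0`, the likelihood ratio
`P(G_N|v_c,T)/P(G_N|v_p,T)` between the center and a leaf of the star equals `N − 1`,
independently of `T`. -/
theorem stmt_13 (d N : ℕ) (hd : 3 ≤ d) (hN : 2 ≤ N) (T : ℝ) (hT : 0 < T) :
    (Real.exp (-((d : ℝ) - (N : ℝ) + 1) * T) *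
      (∫ t in (0:ℝ)..T, Real.exp (-t) * Real.exp (-((d : ℝ) - 1) * (T - t))) ^ (N - 1)) /
    (Real.exp (-((d : ℝ) - 1) * T) *
      ∫ x in (0:ℝ)..T, Real.exp (-x) * Real.exp (-((d : ℝ) - (N : ℝ) + 1) * (T - x)) *
        ((Real.exp (-(T - x)) - Real.exp (-((d : ℝ) - 1) * (T - x))) / ((d : ℝ) - 2)) ^ (N - 2))
    = (N : ℝ) - 1 := by
  obtain ⟨k, rfl⟩ : ∃ k, N = k + 2 := ⟨N - 2, by omega⟩
  simp only [show k + 2 - 1 = k + 1 from rfl, show k + 2 - 2 = k from rfl]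
  set D : ℝ := (d : ℝ) with hD
  have hD3 : (3:ℝ) ≤ D := by rw [hD]; exact_mod_cast hd
  have hD2 : (0:ℝ) < D - 2 := by linarith
  have hD2' : D - 2 ≠ 0 := ne_of_gt hD2
  have hc1 : D - 1 ≠ 1 := by intro h; linarith [h]
  have hNk : ((k + 2 : ℕ) : ℝ) = (k : ℝ) + 2 := by push_cast; ring
  have hk1 : ((k:ℝ) + 1) ≠ 0 := by positivity
  set G : ℝ := 1 - Real.exp (-((D - 2) * T)) with hGdef
  have hG : 0 < G := by
    have : Real.exp (-((D - 2) * T)) < 1 := by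
      apply Real.exp_lt_one_iff.mpr
      have : 0 < (D - 2) * T := mul_pos hD2 hT
      linarith
    simp only [hGdef]; linarith
  -- split lemma for differences of exponentials
  have hsplit : ∀ s : ℝ, Real.exp (-s) - Real.exp (-(D-1)*s)
      = Real.exp (-s) * (1 - Real.exp (-((D-2)*s))) := by
    intro s
    rw [mul_sub, mul_one, ← Real.exp_add]
    congr 2
    ring
  -- first integral
  rw [lemA (D - 1) T hc1]
  have hDD : D - 1 - 1 = D - 2 := by ring
  rw [hDD]
  -- second integral: pointwise rewrite
  have hx : ∀ x : ℝ,
      Real.exp (-x) * Real.exp (-(D - ((k+2:ℕ):ℝ) + 1) * (T - x)) *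
        ((Real.exp (-(T - x)) - Real.exp (-(D - 1) * (T - x))) / (D - 2)) ^ k
      = (Real.exp (-T) / (D - 2) ^ k) *
        (Real.exp (-((D-2)*(T-x))) * (1 - Real.exp (-((D-2)*(T-x)))) ^ k) := by
    intro x
    rw [hsplit (T - x), div_pow, mul_pow,
      show Real.exp (-(T-x)) ^ k = Real.exp ((k:ℝ) * (-(T-x))) from (Real.exp_nat_mul _ k).symm]
    have hE : Real.exp (-x) * Real.exp (-(D - ((k+2:ℕ):ℝ) + 1) * (T-x)) * Real.exp ((k:ℝ) * (-(T-x)))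
        = Real.exp (-T) * Real.exp (-((D-2)*(T-x))) := by
      rw [← Real.exp_add, ← Real.exp_add, ← Real.exp_add]
      congr 1
      push_cast
      ring
    linear_combination ((1 - Real.exp (-((D-2)*(T-x))))^k / (D-2)^k) * hE
  rw [intervalIntegral.integral_congr (g := fun x =>
      (Real.exp (-T) / (D - 2) ^ k) *
        (Real.exp (-((D-2)*(T-x))) * (1 - Real.exp (-((D-2)*(T-x)))) ^ k))
      (fun x _ => hx x)]
  rw [intervalIntegral.integral_const_mul, lemB (D-2) T hD2' k]
  -- now pure algebra
  rw [hsplit T]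
  have hden : Real.exp (-(D - 1) * T) *
      (Real.exp (-T) / (D - 2) ^ k * ((1 - Real.exp (-((D-2)*T))) ^ (k+1) / (((k:ℝ)+1) * (D-2)))) ≠ 0 := by
    apply ne_of_gt
    apply mul_pos (Real.exp_pos _)
    apply mul_pos (div_pos (Real.exp_pos _) (pow_pos hD2 k))
    exact div_pos (pow_pos hG (k+1)) (mul_pos (by positivity) hD2)
  rw [div_eq_iff hden]
  have hexp : Real.exp (-(D - ((k+2:ℕ):ℝ) + 1) * T) * Real.exp (-T) ^ (k+1)
      = Real.exp (-(D-1)*T) * Real.exp (-T) := by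
    rw [show Real.exp (-T) ^ (k+1) = Real.exp (((k+1:ℕ):ℝ) * (-T)) from (Real.exp_nat_mul _ _).symm,
      ← Real.exp_add, ← Real.exp_add]
    congr 1
    push_cast
    ring
  calc Real.exp (-(D - ((k+2:ℕ):ℝ) + 1) * T) * (Real.exp (-T) * G / (D - 2)) ^ (k+1)
      = (Real.exp (-(D - ((k+2:ℕ):ℝ) + 1) * T) * Real.exp (-T) ^ (k+1)) *
          (G ^ (k+1) / (D-2) ^ (k+1)) := by rw [div_pow, mul_pow]; ring
    _ = (Real.exp (-(D-1)*T) * Real.exp (-T)) * (G ^ (k+1) / (D-2) ^ (k+1)) := by rw [hexp]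
    _ = (((k+2:ℕ):ℝ) - 1) * (Real.exp (-(D - 1) * T) *
          (Real.exp (-T) / (D - 2) ^ k * (G ^ (k+1) / (((k:ℝ)+1) * (D-2))))) := by
        push_cast
        field_simp
        ring
end
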